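/- For every integer k ≥ 1, define the polynomial a_k = ∑_{j ≥ 0} (−1)^j · ((5j)!/(j!)^5) · binom(k−1, 5j) · x^{5j} ∈ ℤ[x], and let θ be the operator on ℤ[x] with θ(P) = x·P′. Then every coefficient of the polynomial θ^4(a_k) − 5^5 x^5 ((θ+1)(θ+2)(θ+3)(θ+4))(a_k) is divisible by k; that is, L a_k ≡ 0 (mod k ℤ[x]) for the Picard–Fuchs operator L = θ^4 − 5^5 x^5 (θ+1)(θ+2)(θ+3)(θ+4). -/
import Mathlib

open Polynomial

/-- `a_k = ∑_j (−1)^j ((5j)!/(j!)^5) C(k−1, 5j) x^(5j) ∈ ℤ[x]`. -/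
noncomputable def quinticAk (k : ℕ) : Polynomial ℤ :=
  ∑ j ∈ Finset.range k,
    Polynomial.C ((-1) ^ j * (((5 * j).factorial / (j.factorial) ^ 5 : ℕ) : ℤ)
        * ((k - 1).choose (5 * j) : ℤ)) * Polynomial.X ^ (5 * j)

/-- The operator `θ = x·d/dx` on `ℤ[x]`. -/
noncomputable def thetaPoly (P : Polynomial ℤ) : Polynomial ℤ :=
  Polynomial.X * Polynomial.derivative P

/-- multinomial (5j)!/(j!)^5 -/
def Mq (j : ℕ) : ℕ := (5*j).factorial / (j.factorial)^5

lemma fact5 (j : ℕ) : (j.factorial)^5 ∣ (5*j).factorial := by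
  have h2 := Nat.factorial_mul_factorial_dvd_factorial_add j j
  have h3 := Nat.factorial_mul_factorial_dvd_factorial_add (j+j) j
  have h4 := Nat.factorial_mul_factorial_dvd_factorial_add (j+j+j) j
  have h5 := Nat.factorial_mul_factorial_dvd_factorial_add (j+j+j+j) j
  have e : 5*j = j+j+j+j+j := by ring
  rw [e]
  calc (j.factorial)^5
      = (((j.factorial * j.factorial) * j.factorial) * j.factorial) * j.factorial := by ring
    _ ∣ _ :=
      dvd_trans (mul_dvd_mul_right (dvd_trans (mul_dvd_mul_right
        (dvd_trans (mul_dvd_mul_right h2 _) h3) _) h4) _) h5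

lemma Mq_spec (j : ℕ) : (j.factorial)^5 * Mq j = (5*j).factorial := by
  rw [Mq, Nat.mul_div_cancel' (fact5 j)]

lemma Mq_rec (j : ℕ) :
    (5*(j+1))^4 * Mq (j+1) = 5^5 * ((5*j+1)*(5*j+2)*(5*j+3)*(5*j+4)) * Mq j := by
  have hpos : 0 < ((j+1).factorial)^5 := pow_pos (Nat.factorial_pos _) 5
  apply Nat.eq_of_mul_eq_mul_left hpos
  have e1 : ((j+1).factorial)^5 * ((5*(j+1))^4 * Mq (j+1))
      = (5*(j+1))^4 * (((j+1).factorial)^5 * Mq (j+1)) := by ring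
  have e2 : (5*(j+1)) = (5*j+4)+1 := by ring
  have e3 : ((j+1).factorial)^5 = (j+1)^5 * (j.factorial)^5 := by
    rw [Nat.factorial_succ]; ring
  rw [e1, Mq_spec, e3]
  have e4 : (5*(j+1)).factorial
      = (5*j+5)*((5*j+4)*((5*j+3)*((5*j+2)*((5*j+1)*(5*j).factorial)))) := by
    have : 5*(j+1) = 5*j+1+1+1+1+1 := by ring
    rw [this]
    simp [Nat.factorial_succ]
  rw [e4]
  have e5 : (j+1)^5 * (j.factorial)^5 * (5^5*((5*j+1)*(5*j+2)*(5*j+3)*(5*j+4)) * Mq j)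
      = (5^5 * (j+1)^5) * ((5*j+1)*(5*j+2)*(5*j+3)*(5*j+4)) * ((j.factorial)^5 * Mq j) := by ring
  rw [e5, Mq_spec]
  have : 5^5*(j+1)^5 = (5*(j+1))^5 := by ring
  rw [this, e2]
  ring

/-- coefficient function of `a_k` -/
noncomputable def Acoef (k : ℕ) (m : ℕ) : ℤ :=
  if 5 ∣ m then (-1)^(m/5) * (Mq (m/5) : ℤ) * ((k-1).choose m : ℤ) else 0

lemma theta_coeff (P : Polynomial ℤ) (n : ℕ) :
    (thetaPoly P).coeff n = n * P.coeff n := by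
  unfold thetaPoly
  cases n with
  | zero => simp
  | succ m =>
    rw [Polynomial.coeff_X_mul, Polynomial.coeff_derivative]
    push_cast; ring

lemma coeff_quinticAk (k : ℕ) (hk : 1 ≤ k) (m : ℕ) :
    (quinticAk k).coeff m = Acoef k m := by
  unfold quinticAk Acoef
  rw [Polynomial.finset_sum_coeff]
  simp only [Polynomial.coeff_C_mul, Polynomial.coeff_X_pow, mul_ite, mul_one, mul_zero]
  by_cases h5 : 5 ∣ m
  · obtain ⟨j0, rfl⟩ := h5
    have hiff : ∀ j : ℕ, (5 * j0 = 5 * j) ↔ (j = j0) := by intro j; omega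
    simp only [hiff]
    rw [Finset.sum_ite_eq' (Finset.range k) j0]
    simp only [Finset.mem_range]
    have hdiv : 5 * j0 / 5 = j0 := by omega
    rw [if_pos (Nat.dvd_mul_right 5 j0), hdiv]
    by_cases hj : j0 < k
    · rw [if_pos hj]; rfl
    · rw [if_neg hj]
      have : (k-1).choose (5*j0) = 0 := by
        apply Nat.choose_eq_zero_of_lt; omega
      rw [this]; push_cast; ring
  · rw [if_neg h5]
    apply Finset.sum_eq_zero
    intro j _
    rw [if_neg]
    intro h; exact h5 ⟨j, h⟩

lemma key_dvd (k : ℕ) (hk : 1 ≤ k) (N : ℕ) :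
    (k : ℤ) ∣ ((N+1 : ℕ) : ℤ) * (k.choose (N+1) : ℤ) := by
  obtain ⟨K, rfl⟩ : ∃ K, k = K + 1 := ⟨k - 1, by omega⟩
  have : (K+1) ∣ (N+1) * (K+1).choose (N+1) := by
    refine ⟨K.choose N, ?_⟩
    rw [mul_comm]
    exact (Nat.add_one_mul_choose_eq K N).symm
  exact_mod_cast Int.natCast_dvd_natCast.mpr this

lemma key_dvd' (k : ℕ) (hk : 1 ≤ k) (N : ℕ) (hN : 1 ≤ N) :
    (k : ℤ) ∣ ((N : ℕ) : ℤ) * (k.choose N : ℤ) := by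
  obtain ⟨N', rfl⟩ : ∃ N', N = N' + 1 := ⟨N - 1, by omega⟩
  exact key_dvd k hk N'

/-- For every `k ≥ 1`, every coefficient of `L a_k` is divisible by `k`, where
`L = θ^4 − 5^5 x^5 (θ+1)(θ+2)(θ+3)(θ+4)` is the Picard–Fuchs operator of the quintic
pencil and `a_k = ∑_j (−1)^j ((5j)!/(j!)^5) C(k−1,5j) x^(5j)`; i.e. `L a_k ≡ 0 mod k ℤ[x]`. -/
theorem stmt10 (k : ℕ) (hk : 1 ≤ k) :
    ∀ n : ℕ, (k : ℤ) ∣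
      (thetaPoly (thetaPoly (thetaPoly (thetaPoly (quinticAk k))))
        - 5 ^ 5 * Polynomial.X ^ 5 *
          ((fun P => thetaPoly P + 1 * P) ((fun P => thetaPoly P + 2 * P)
            ((fun P => thetaPoly P + 3 * P)
              ((fun P => thetaPoly P + 4 * P) (quinticAk k)))))).coeff n := by
  intro n
  simp only []
  have h0 : ∀ m, (quinticAk k).coeff m = Acoef k m := coeff_quinticAk k hk
  have step : ∀ (P : Polynomial ℤ) (f : ℕ → ℤ) (c : ℤ), (∀ m, P.coeff m = f m) →
      ∀ m : ℕ, (thetaPoly P + Polynomial.C c * P).coeff m = ((m : ℤ) + c) * f m := by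
    intro P f c hP m
    rw [Polynomial.coeff_add, theta_coeff, Polynomial.coeff_C_mul, hP]
    ring
  have e1 : (1 : Polynomial ℤ) = Polynomial.C 1 := by norm_num
  have e2 : (2 : Polynomial ℤ) = Polynomial.C 2 := by norm_num
  have e3 : (3 : Polynomial ℤ) = Polynomial.C 3 := by norm_num
  have e4 : (4 : Polynomial ℤ) = Polynomial.C 4 := by norm_num
  rw [e1, e2, e3, e4]
  have hB4 := step (quinticAk k) (fun m => Acoef k m) 4 h0
  have hB3 := step _ (fun m => ((m:ℤ)+4) * Acoef k m) 3 hB4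
  have hB2 := step _ (fun m => ((m:ℤ)+3)*(((m:ℤ)+4) * Acoef k m)) 2 hB3
  have hB1 := step _ (fun m => ((m:ℤ)+2)*(((m:ℤ)+3)*(((m:ℤ)+4) * Acoef k m))) 1 hB2
  set B := thetaPoly
      (thetaPoly (thetaPoly (thetaPoly (quinticAk k) + Polynomial.C 4 * quinticAk k)
          + Polynomial.C 3 * (thetaPoly (quinticAk k) + Polynomial.C 4 * quinticAk k))
        + Polynomial.C 2 * (thetaPoly (thetaPoly (quinticAk k) + Polynomial.C 4 * quinticAk k)
          + Polynomial.C 3 * (thetaPoly (quinticAk k) + Polynomial.C 4 * quinticAk k)))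
      + Polynomial.C 1 * (thetaPoly (thetaPoly (quinticAk k) + Polynomial.C 4 * quinticAk k)
          + Polynomial.C 3 * (thetaPoly (quinticAk k) + Polynomial.C 4 * quinticAk k)
        + Polynomial.C 2 * (thetaPoly (thetaPoly (quinticAk k) + Polynomial.C 4 * quinticAk k)
          + Polynomial.C 3 * (thetaPoly (quinticAk k) + Polynomial.C 4 * quinticAk k))) with hB
  have hT : ∀ m : ℕ, (thetaPoly (thetaPoly (thetaPoly (thetaPoly (quinticAk k))))).coeff m
      = (m:ℤ)^4 * Acoef k m := by
    intro m
    rw [theta_coeff, theta_coeff, theta_coeff, theta_coeff, h0]; ring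
  rw [Polynomial.coeff_sub, hT, mul_assoc]
  have h55 : ∀ (Q : Polynomial ℤ) (nn : ℕ),
      ((5:Polynomial ℤ)^5 * Q).coeff nn = 5^5 * Q.coeff nn := by
    intro Q nn
    rw [show ((5:Polynomial ℤ))^5 = Polynomial.C (5^5) by norm_num, Polynomial.coeff_C_mul]
  rw [h55]
  rcases lt_or_ge n 5 with h5 | h5
  · rw [mul_comm (Polynomial.X^5), Polynomial.coeff_mul_X_pow', if_neg (by omega)]
    by_cases hz : n = 0
    · subst hz; simp
    · have : Acoef k n = 0 := by unfold Acoef; rw [if_neg (by omega)]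
      rw [this]; simp
  · obtain ⟨m, rfl⟩ : ∃ m, n = m + 5 := ⟨n - 5, by omega⟩
    rw [Polynomial.coeff_X_pow_mul _ 5 m, hB1 m]
    beta_reduce
    by_cases hd : 5 ∣ m
    · obtain ⟨j, rfl⟩ := hd
      have hA1 : Acoef k (5*j) = (-1)^j * (Mq j : ℤ) * ((k-1).choose (5*j) : ℤ) := by
        unfold Acoef
        rw [ if_pos (Nat.dvd_mul_right 5 j)]
        have : 5*j/5 = j := by omega
        rw [this]
      have hA2 : Acoef k (5*j+5) = (-1)^(j+1) * (Mq (j+1) : ℤ) * ((k-1).choose (5*j+5) : ℤ) := by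
        unfold Acoef
        rw [ if_pos ⟨j+1, by ring⟩]
        have : (5*j+5)/5 = j+1 := by omega
        rw [this]
      rw [hA1, hA2]
      obtain ⟨K, rfl⟩ : ∃ K, k = K + 1 := ⟨k - 1, by omega⟩
      have hK : K + 1 - 1 = K := by omega
      rw [hK]
      -- Pascal identities
      have pas : ∀ N : ℕ, (((K+1)).choose (N+1) : ℤ) = (K.choose N : ℤ) + (K.choose (N+1) : ℤ) := by
        intro N; exact_mod_cast Nat.choose_succ_succ K N
      have p1 := pas (5*j)
      have p2 : (((K+1)).choose (5*j+2) : ℤ) = (K.choose (5*j+1) : ℤ) + (K.choose (5*j+2) : ℤ) :=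
        pas (5*j+1)
      have p3 : (((K+1)).choose (5*j+3) : ℤ) = (K.choose (5*j+2) : ℤ) + (K.choose (5*j+3) : ℤ) :=
        pas (5*j+2)
      have p4 : (((K+1)).choose (5*j+4) : ℤ) = (K.choose (5*j+3) : ℤ) + (K.choose (5*j+4) : ℤ) :=
        pas (5*j+3)
      have p5 : (((K+1)).choose (5*j+5) : ℤ) = (K.choose (5*j+4) : ℤ) + (K.choose (5*j+5) : ℤ) :=
        pas (5*j+4)
      -- divisibilities
      obtain ⟨q1, hq1⟩ := key_dvd' (K+1) (by omega) (5*j+1) (by omega)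
      obtain ⟨q2, hq2⟩ := key_dvd' (K+1) (by omega) (5*j+2) (by omega)
      obtain ⟨q3, hq3⟩ := key_dvd' (K+1) (by omega) (5*j+3) (by omega)
      obtain ⟨q4, hq4⟩ := key_dvd' (K+1) (by omega) (5*j+4) (by omega)
      obtain ⟨q5, hq5⟩ := key_dvd' (K+1) (by omega) (5*j+5) (by omega)
      have hrecZ : ((5:ℤ)*((j:ℤ)+1))^4 * (Mq (j+1) : ℤ)
          = 5^5*((5*(j:ℤ)+1)*(5*(j:ℤ)+2)*(5*(j:ℤ)+3)*(5*(j:ℤ)+4))*(Mq j : ℤ) := by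
        exact_mod_cast Mq_rec j
      refine ⟨(-1:ℤ)^(j+1) * ((5*(j:ℤ)+5)^3 * (Mq (j+1):ℤ) * q5
        - 5^5*((5*(j:ℤ)+1)*(5*(j:ℤ)+2)*(5*(j:ℤ)+3))*(Mq j:ℤ)*q4
        + 5^5*((5*(j:ℤ)+1)*(5*(j:ℤ)+2)*(5*(j:ℤ)+4))*(Mq j:ℤ)*q3
        - 5^5*((5*(j:ℤ)+1)*(5*(j:ℤ)+3)*(5*(j:ℤ)+4))*(Mq j:ℤ)*q2
        + 5^5*((5*(j:ℤ)+2)*(5*(j:ℤ)+3)*(5*(j:ℤ)+4))*(Mq j:ℤ)*q1), ?_⟩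
      push_cast at hq1 hq2 hq3 hq4 hq5 ⊢
      linear_combination
          (-(-1:ℤ)^(j+1) * ((5*(j:ℤ)+5)^4 * (Mq (j+1):ℤ))) * p5
        + ((-1:ℤ)^(j+1) * (5^5*((5*(j:ℤ)+1)*(5*(j:ℤ)+2)*(5*(j:ℤ)+3)*(5*(j:ℤ)+4))*(Mq j:ℤ))) * p4
        - ((-1:ℤ)^(j+1) * (5^5*((5*(j:ℤ)+1)*(5*(j:ℤ)+2)*(5*(j:ℤ)+3)*(5*(j:ℤ)+4))*(Mq j:ℤ))) * p3
        + ((-1:ℤ)^(j+1) * (5^5*((5*(j:ℤ)+1)*(5*(j:ℤ)+2)*(5*(j:ℤ)+3)*(5*(j:ℤ)+4))*(Mq j:ℤ))) * p2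
        - ((-1:ℤ)^(j+1) * (5^5*((5*(j:ℤ)+1)*(5*(j:ℤ)+2)*(5*(j:ℤ)+3)*(5*(j:ℤ)+4))*(Mq j:ℤ))) * p1
        - ((-1:ℤ)^(j+1) * (K.choose (5*j+4) : ℤ)) * hrecZ
        + ((-1:ℤ)^(j+1) * (5*(j:ℤ)+5)^3 * (Mq (j+1):ℤ)) * hq5
        - ((-1:ℤ)^(j+1) * 5^5*((5*(j:ℤ)+1)*(5*(j:ℤ)+2)*(5*(j:ℤ)+3))*(Mq j:ℤ)) * hq4
        + ((-1:ℤ)^(j+1) * 5^5*((5*(j:ℤ)+1)*(5*(j:ℤ)+2)*(5*(j:ℤ)+4))*(Mq j:ℤ)) * hq3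
        - ((-1:ℤ)^(j+1) * 5^5*((5*(j:ℤ)+1)*(5*(j:ℤ)+3)*(5*(j:ℤ)+4))*(Mq j:ℤ)) * hq2
        + ((-1:ℤ)^(j+1) * 5^5*((5*(j:ℤ)+2)*(5*(j:ℤ)+3)*(5*(j:ℤ)+4))*(Mq j:ℤ)) * hq1
    · have h1 : Acoef k m = 0 := by unfold Acoef; rw [if_neg hd]
      have h2 : Acoef k (m+5) = 0 := by unfold Acoef; rw [if_neg (by omega)]
      rw [h1, h2]
      simp
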